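/- (The angles ω n converge to the right angle.) The sequence ω n := Real.arccos (1 - (q n)^2 / (2 * (p n)^2)) tends to π / 2 as n → ∞, i.e. Filter.Tendsto (fun n => Real.arccos (1 - ((q n : ℝ))^2 / (2 * ((p n : ℝ))^2))) Filter.atTop (nhds (Real.pi / 2)). -/

import Mathlib

mutual
/-- The Pythagorean side numbers. -/
def p : ℕ → ℕ
  | 0 => 1
  | n + 1 => p n + q n
/-- The Pythagorean diameter numbers. -/
def q : ℕ → ℕ
  | 0 => 1
  | n + 1 => 2 * p n + q n
end

/-! `q n ^ 2 - 2 * p n ^ 2 = ±1` (Pell), so the cosine `1 - q n ^ 2 / (2 * p n ^ 2)` of the apex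
angle equals `±1 / (2 * p n ^ 2)`, which tends to `0` as the side numbers grow; by continuity of
`arccos`, the angles tend to `arccos 0 = π / 2`. -/

open Filter Topology

theorem q_sq_sub_two_mul_p_sq (n : ℕ) : (q n : ℤ) ^ 2 - 2 * (p n : ℤ) ^ 2 = (-1) ^ (n + 1) := by
  induction n with
  | zero => simp [p, q]
  | succ n ih =>
    simp only [p, q]
    push_cast
    linear_combination (-1 : ℤ) * ih

theorem one_le_q (n : ℕ) : 1 ≤ q n := by
  induction n with
  | zero => simp [q]
  | succ n ih => simp only [q]; omega

theorem lt_p (n : ℕ) : n < p n := by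
  induction n with
  | zero => simp [p]
  | succ n ih =>
    have := one_le_q n
    simp only [p]
    omega

theorem tendsto_p_atTop : Tendsto (fun n ↦ (p n : ℝ)) atTop atTop :=
  tendsto_natCast_atTop_atTop.comp <|
    tendsto_atTop_mono (fun n ↦ (lt_p n).le) tendsto_id

theorem one_sub_q_sq_div (n : ℕ) :
    1 - (q n : ℝ) ^ 2 / (2 * (p n : ℝ) ^ 2) = (-1) ^ n / (2 * (p n : ℝ) ^ 2) := by
  have hp : (p n : ℝ) ≠ 0 := Nat.cast_ne_zero.mpr ((Nat.zero_le n).trans_lt (lt_p n)).ne'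
  have pell : (q n : ℝ) ^ 2 = 2 * (p n : ℝ) ^ 2 + (-1) ^ (n + 1) := by
    exact_mod_cast (sub_eq_iff_eq_add'.mp (q_sq_sub_two_mul_p_sq n))
  rw [pell]
  field_simp
  ring

theorem tendsto_one_sub_q_sq_div : Tendsto (fun n ↦ 1 - (q n : ℝ) ^ 2 / (2 * (p n : ℝ) ^ 2))
    atTop (𝓝 0) := by
  simp_rw [one_sub_q_sq_div]
  have hden : Tendsto (fun n ↦ 2 * (p n : ℝ) ^ 2) atTop atTop :=
    (tendsto_pow_atTop two_ne_zero).comp tendsto_p_atTop |>.const_mul_atTop two_pos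
  refine tendsto_zero_iff_norm_tendsto_zero.mpr <| (tendsto_inv_atTop_zero.comp hden).congr ?_
  intro n
  simp [norm_div]

/-- The angles ω n converge to the right angle. -/
theorem omega_tendsto_right_angle :
    Filter.Tendsto (fun n => Real.arccos (1 - ((q n : ℝ)) ^ 2 / (2 * ((p n : ℝ)) ^ 2)))
      Filter.atTop (nhds (Real.pi / 2)) := by
  simpa only [Real.arccos_zero, Function.comp_def] using
    (Real.continuous_arccos.tendsto 0).comp tendsto_one_sub_q_sq_div
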